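/- arXiv:2305.15613 — 2 statements merged into one kernel-verified Lean document; each statement's English description precedes it below -/
import Mathlib

section
/- (Fixed eigenvector of the representation.) For all R, R_O ∈ O(n), the representation matrix V = M_nᵀ · D(R_O) · D(R) · D(R_O)ᵀ · M_n fixes the all-ones vector: V · 𝟙_{n+1} = 𝟙_{n+1}, where 𝟙_{n+1} ∈ ℝ^{n+1} is the all-ones vector; equivalently, (1/√(n+1))·𝟙_{n+1} is an eigenvector of V with eigenvalue 1. -/
/-- κ = −(1+√(n+1))/n^{3/2} -/
noncomputable def simplexKappa (n : ℕ) : ℝ :=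
  -(1 + Real.sqrt (n + 1)) / (n : ℝ) ^ ((3 : ℝ) / 2)

/-- μ = √(1 + 1/n) -/
noncomputable def simplexMu (n : ℕ) : ℝ := Real.sqrt (1 + 1 / n)

/-- The vertices p_1, …, p_{n+1} ∈ ℝ^n of the regular n-simplex (0-indexed by `Fin (n+1)`):
`p_1 = n^{-1/2}·𝟙` and `p_i = κ·𝟙 + μ·e_{i-1}` for `2 ≤ i ≤ n+1`. -/
noncomputable def simplexVertex (n : ℕ) (i : Fin (n + 1)) : EuclideanSpace ℝ (Fin n) :=
  WithLp.toLp 2 fun (j : Fin n) =>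
    if (i : ℕ) = 0 then (n : ℝ) ^ (-(1 : ℝ) / 2)
    else simplexKappa n + (if (j : ℕ) = (i : ℕ) - 1 then simplexMu n else 0)

open Matrix

/-- The (n+1)×(n+1) change-of-basis matrix M_n whose i-th column is
m_i = (1/p)·(p_i, n^{-1/2}) with p = √(1 + 1/n). -/
noncomputable def simplexM (n : ℕ) : Matrix (Fin (n + 1)) (Fin (n + 1)) ℝ :=
  Matrix.of fun j i =>
    (Real.sqrt (1 + 1 / n))⁻¹ *
      (if h : (j : ℕ) < n then simplexVertex n i ⟨j, h⟩ else (n : ℝ) ^ (-(1 : ℝ) / 2))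
/-- D(A): the (n+1)×(n+1) block-diagonal matrix diag(A, 1), appending a 1 to the
diagonal of the n×n matrix A. -/
def blockDiag1 (n : ℕ) (A : Matrix (Fin n) (Fin n) ℝ) :
    Matrix (Fin (n + 1)) (Fin (n + 1)) ℝ :=
  Matrix.of fun i j =>
    if hi : (i : ℕ) < n then (if hj : (j : ℕ) < n then A ⟨i, hi⟩ ⟨j, hj⟩ else 0)
    else (if (i : ℕ) = (j : ℕ) then 1 else 0)


/-!
Every `D(A)` fixes the last basis vector `e` of `ℝ^{n+1}`. Since the simplex vertices sum to
zero and the last row of `M_n` is constant `1/√(n+1)`, `M_n 𝟙 = √(n+1) e`, and `M_nᵀ` sends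
`√(n+1) e` back to `𝟙`.
-/

namespace SimplexRepresentation

variable {n : ℕ}

lemma rpow_neg_half_eq_inv_sqrt : (n : ℝ) ^ (-(1 : ℝ) / 2) = (Real.sqrt n)⁻¹ := by
  rw [neg_div, Real.rpow_neg n.cast_nonneg, Real.sqrt_eq_rpow]

lemma sqrt_one_add_one_div (hn : 1 ≤ n) :
    Real.sqrt (1 + 1 / n) = Real.sqrt (n + 1) / Real.sqrt n := by
  have hn0 : (0 : ℝ) < n := by exact_mod_cast hn
  rw [← Real.sqrt_div (by positivity), one_add_div hn0.ne', add_comm]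

lemma simplexKappa_eq (hn : 1 ≤ n) :
    simplexKappa n = -(1 + Real.sqrt (n + 1)) / (n * Real.sqrt n) := by
  have hn0 : (0 : ℝ) < n := by exact_mod_cast hn
  rw [simplexKappa, show (3 : ℝ) / 2 = 1 + 1 / 2 by norm_num, Real.rpow_add hn0,
    Real.rpow_one, ← Real.sqrt_eq_rpow]

lemma sum_simplexVertex (hn : 1 ≤ n) : ∑ i, simplexVertex n i = 0 := by
  have hcoord : (n : ℝ) ^ (-(1 : ℝ) / 2) + n * simplexKappa n + simplexMu n = 0 := by
    rw [rpow_neg_half_eq_inv_sqrt, simplexKappa_eq hn, simplexMu, sqrt_one_add_one_div hn]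
    field_simp
    ring
  ext j
  rw [Fin.sum_univ_succ]
  simp only [PiLp.add_apply, WithLp.ofLp_sum, Finset.sum_apply, simplexVertex,
    Fin.val_zero, Fin.val_succ, if_true, Nat.add_one_ne_zero, if_false, Nat.add_sub_cancel,
    ← Fin.ext_iff, Finset.sum_add_distrib, Finset.sum_ite_eq, Finset.mem_univ,
    Finset.sum_const, Finset.card_univ, Fintype.card_fin, nsmul_eq_mul, PiLp.zero_apply]
  linarith

lemma simplexM_last (hn : 1 ≤ n) (i : Fin (n + 1)) :
    simplexM n (Fin.last n) i = (Real.sqrt (n + 1))⁻¹ := by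
  simp only [simplexM, Matrix.of_apply, Fin.val_last, lt_irrefl, dif_neg, not_false_eq_true,
    sqrt_one_add_one_div hn, rpow_neg_half_eq_inv_sqrt]
  field_simp

lemma simplexM_mulVec_one (hn : 1 ≤ n) :
    simplexM n *ᵥ (fun _ => 1) = Pi.single (Fin.last n) (Real.sqrt (n + 1)) := by
  ext j
  cases j using Fin.lastCases with
  | last =>
    simp only [Matrix.mulVec, dotProduct, simplexM_last hn, mul_one, Finset.sum_const,
      Finset.card_univ, Fintype.card_fin, nsmul_eq_mul, Pi.single_eq_same]
    field_simp
    push_cast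
    rw [Real.sq_sqrt (by positivity)]
  | cast j =>
    have hcoord := congrArg (fun v : EuclideanSpace ℝ (Fin n) => v j) (sum_simplexVertex hn)
    simp only [WithLp.ofLp_sum, Finset.sum_apply, PiLp.zero_apply] at hcoord
    simp [Matrix.mulVec, dotProduct, simplexM, ← Finset.mul_sum, hcoord,
      Fin.castSucc_ne_last]

lemma simplexM_transpose_mulVec_single_last (hn : 1 ≤ n) :
    (simplexM n)ᵀ *ᵥ Pi.single (Fin.last n) (Real.sqrt (n + 1)) = fun _ => 1 := by
  have hs : 0 < Real.sqrt ((n : ℝ) + 1) := Real.sqrt_pos.2 (by positivity)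
  ext i
  simp [simplexM_last hn, hs.ne']

lemma blockDiag1_mulVec_single_last (A : Matrix (Fin n) (Fin n) ℝ) (c : ℝ) :
    blockDiag1 n A *ᵥ Pi.single (Fin.last n) c = Pi.single (Fin.last n) c := by
  ext i
  simp [blockDiag1, Pi.single_apply, Fin.ext_iff]
  omega

lemma blockDiag1_transpose_mulVec_single_last (A : Matrix (Fin n) (Fin n) ℝ) (c : ℝ) :
    (blockDiag1 n A)ᵀ *ᵥ Pi.single (Fin.last n) c = Pi.single (Fin.last n) c := by
  ext i
  simp [blockDiag1, Pi.single_apply, Fin.ext_iff, eq_comm]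

end SimplexRepresentation

theorem representation_fixes_ones_general (n : ℕ) (hn : 1 ≤ n)
    (R RO : Matrix (Fin n) (Fin n) ℝ) :
    ((simplexM n)ᵀ * blockDiag1 n RO * blockDiag1 n R * (blockDiag1 n RO)ᵀ *
        simplexM n).mulVec (fun _ => (1 : ℝ)) = fun _ => (1 : ℝ) := by
  simp only [← Matrix.mulVec_mulVec, SimplexRepresentation.simplexM_mulVec_one hn,
    SimplexRepresentation.blockDiag1_transpose_mulVec_single_last,
    SimplexRepresentation.blockDiag1_mulVec_single_last,
    SimplexRepresentation.simplexM_transpose_mulVec_single_last hn]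

/-- (Fixed eigenvector of the representation.) For R, R_O ∈ O(n), the representation
V = M_nᵀ · D(R_O) · D(R) · D(R_O)ᵀ · M_n fixes the all-ones vector:
V · 𝟙_{n+1} = 𝟙_{n+1}; equivalently (1/√(n+1))·𝟙_{n+1} is an eigenvector of V with
eigenvalue 1. -/
theorem representation_fixes_ones (n : ℕ) (hn : 1 ≤ n)
    (R RO : Matrix (Fin n) (Fin n) ℝ) (hR : Rᵀ * R = 1) (hRO : ROᵀ * RO = 1) :
    ((simplexM n)ᵀ * blockDiag1 n RO * blockDiag1 n R * (blockDiag1 n RO)ᵀ *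
        simplexM n).mulVec (fun _ => (1 : ℝ)) = fun _ => (1 : ℝ) :=
  representation_fixes_ones_general n hn R RO
end

section
/- (Proposition: equivariant bias.) For every R ∈ O(n), every input X ∈ ℝ^{n+2}, and every scalar b ∈ ℝ, the biased output of the equivariant hypersphere is O(n)-equivariant: V · (B·X + b·𝟙_{n+1}) = B·(D₂(R)·X) + b·𝟙_{n+1}, where V = M_nᵀ · D(R_O · R · R_Oᵀ) · M_n and 𝟙_{n+1} ∈ ℝ^{n+1} is the all-ones vector. -/
open Matrix

/-- D₂(A): the (n+2)×(n+2) block-diagonal matrix diag(A, 1, 1), appending two 1s to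
the diagonal of the n×n matrix A. -/
def blockDiag2 (n : ℕ) (A : Matrix (Fin n) (Fin n) ℝ) :
    Matrix (Fin (n + 2)) (Fin (n + 2)) ℝ :=
  Matrix.of fun i j =>
    if hi : (i : ℕ) < n then (if hj : (j : ℕ) < n then A ⟨i, hi⟩ ⟨j, hj⟩ else 0)
    else (if (i : ℕ) = (j : ℕ) then 1 else 0)

/-- The filter-bank matrix B of the equivariant hypersphere: the (n+1)×(n+2) matrix
whose i-th row is ((R_Oᵀ · T_i · R_O)·c₀, s₁, s₂) ∈ ℝ^{n+2}. -/
noncomputable def filterBank (n : ℕ) (c₀ : EuclideanSpace ℝ (Fin n)) (s₁ s₂ : ℝ)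
    (RO : Matrix (Fin n) (Fin n) ℝ) (T : Fin (n + 1) → Matrix (Fin n) (Fin n) ℝ) :
    Matrix (Fin (n + 1)) (Fin (n + 2)) ℝ :=
  Matrix.of fun i j =>
    if h : (j : ℕ) < n then ((ROᵀ * T i * RO).mulVec c₀) ⟨j, h⟩
    else if (j : ℕ) = n then s₁ else s₂

/-!
Write `M_n = p⁻¹ • [S; n^{-1/2} 𝟙ᵀ]`, where the columns of `S` are the simplex vertices.
The vertices sum to zero and `S Sᵀ = (1 + 1/n) I`, so `M_n` is orthogonal and `M_n 𝟙` lives on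
the last coordinate. Substituting `T_i R_O c₀ = ‖c₀‖ p_i` shows that `M_n B` is block diagonal
with upper-left block a multiple of `R_O`; hence `D(R_O R R_Oᵀ) (M_n B) = (M_n B) D₂(R)`, while
`D(·)` fixes `M_n 𝟙`. Conjugating by the orthogonal `M_n` gives `V B = B D₂(R)` and `V 𝟙 = 𝟙`.
-/

section Intertwining

variable {ι κ R : Type*} [Fintype ι] [Fintype κ] [DecidableEq ι] [CommRing R]
  {N M D : Matrix ι ι R}

lemma mul_mul_mul_eq_of_intertwine {B : Matrix ι κ R} {E : Matrix κ κ R} (hNM : N * M = 1)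
    (h : D * (M * B) = M * B * E) : N * D * M * B = B * E := by
  rw [Matrix.mul_assoc, Matrix.mul_assoc, h, ← Matrix.mul_assoc, ← Matrix.mul_assoc, hNM,
    Matrix.one_mul]

lemma mul_mul_mulVec_eq_self {v : ι → R} (hNM : N * M = 1) (h : D *ᵥ (M *ᵥ v) = M *ᵥ v) :
    (N * D * M) *ᵥ v = v := by
  rw [← mulVec_mulVec, ← mulVec_mulVec, h, mulVec_mulVec, hNM, one_mulVec]

end Intertwining

section Simplex

variable {n : ℕ}

lemma simplexVertex_zero (j : Fin n) : simplexVertex n 0 j = (√n)⁻¹ := by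
  simp [simplexVertex, neg_div, Real.rpow_neg, Real.sqrt_eq_rpow]

lemma simplexVertex_succ (i j : Fin n) :
    simplexVertex n i.succ j = simplexKappa n + if j = i then simplexMu n else 0 := by
  simp [simplexVertex, Fin.val_inj]

lemma simplexMu_eq (hn : 1 ≤ n) : simplexMu n = √(n + 1) / √n := by
  have : (0 : ℝ) < n := by exact_mod_cast hn
  rw [simplexMu, ← Real.sqrt_div' _ this.le]
  congr 1
  field_simp

lemma simplexKappa_eq (hn : 1 ≤ n) : simplexKappa n = -(1 + √(n + 1)) / (n * √n) := by
  have : (0 : ℝ) < n := by exact_mod_cast hn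
  rw [simplexKappa, show (3 / 2 : ℝ) = 1 + 1 / 2 by norm_num, Real.rpow_add this,
    Real.rpow_one, ← Real.sqrt_eq_rpow]

lemma sum_simplexVertex (hn : 1 ≤ n) (j : Fin n) : ∑ i, simplexVertex n i j = 0 := by
  have hn' : (0 : ℝ) < n := by exact_mod_cast hn
  have key : (√n)⁻¹ + n * simplexKappa n + simplexMu n = 0 := by
    rw [simplexMu_eq hn, simplexKappa_eq hn]
    field_simp
    ring
  simp [Fin.sum_univ_succ, simplexVertex_zero, simplexVertex_succ, Finset.sum_add_distrib]
  linarith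

lemma sum_simplexVertex_mul (hn : 1 ≤ n) (j k : Fin n) :
    ∑ i, simplexVertex n i j * simplexVertex n i k = if j = k then 1 + 1 / (n : ℝ) else 0 := by
  have hn' : (0 : ℝ) < n := by exact_mod_cast hn
  have hμ : simplexMu n ^ 2 = 1 + 1 / n := Real.sq_sqrt (by positivity)
  have key : (√n)⁻¹ ^ 2 + n * simplexKappa n ^ 2 + 2 * simplexKappa n * simplexMu n = 0 := by
    have h2 : √((n : ℝ) + 1) ^ 2 = n + 1 := Real.sq_sqrt (by positivity)
    rw [simplexMu_eq hn, simplexKappa_eq hn]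
    field_simp
    linear_combination -h2
  simp [Fin.sum_univ_succ, simplexVertex_zero, simplexVertex_succ, Finset.sum_add_distrib,
    mul_add, add_mul, ite_mul, mul_ite, Finset.sum_ite_eq]
  split_ifs
  · rw [one_div] at hμ
    linear_combination key + hμ
  · linear_combination key

noncomputable def simplexMatrix (n : ℕ) : Matrix (Fin n) (Fin (n + 1)) ℝ :=
  of fun j i => simplexVertex n i j

noncomputable def simplexRow (n : ℕ) : Matrix (Fin 1) (Fin (n + 1)) ℝ :=
  of fun _ _ => (√n)⁻¹

lemma simplexMatrix_mul_transpose (hn : 1 ≤ n) :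
    simplexMatrix n * (simplexMatrix n)ᵀ = (1 + 1 / (n : ℝ)) • 1 := by
  ext j k
  simp [simplexMatrix, mul_apply, sum_simplexVertex_mul hn, one_apply]

lemma simplexMatrix_mul_const {m : Type*} (hn : 1 ≤ n) (c : m → ℝ) :
    simplexMatrix n * of (fun (_ : Fin (n + 1)) k => c k) = 0 := by
  ext j k
  simp [simplexMatrix, mul_apply, ← Finset.sum_mul, sum_simplexVertex hn]

lemma simplexMatrix_mulVec_one (hn : 1 ≤ n) : simplexMatrix n *ᵥ 1 = 0 := by
  ext j
  simp [simplexMatrix, mulVec, dotProduct, sum_simplexVertex hn]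

lemma simplexRow_mul_transpose (hn : 1 ≤ n) :
    simplexRow n * (simplexRow n)ᵀ = (1 + 1 / (n : ℝ)) • 1 := by
  have hn' : (0 : ℝ) < n := by exact_mod_cast hn
  ext j k
  simp [simplexRow, mul_apply, one_apply, Subsingleton.elim j k]
  field_simp
  exact (Real.sq_sqrt hn'.le).symm

lemma simplexM_eq : simplexM n =
    ((√(1 + 1 / n))⁻¹ • fromRows (simplexMatrix n) (simplexRow n)).submatrix
      finSumFinEquiv.symm id := by
  ext j i
  refine Fin.addCases (fun j => ?_) (fun j => ?_) j
  · simp [simplexM, simplexMatrix]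
  · simp [simplexM, simplexRow, neg_div, Real.rpow_neg, Real.sqrt_eq_rpow]

lemma blockDiag1_eq (A : Matrix (Fin n) (Fin n) ℝ) :
    blockDiag1 n A = (fromBlocks A 0 0 1).submatrix finSumFinEquiv.symm finSumFinEquiv.symm := by
  ext i j
  refine Fin.addCases (fun i => ?_) (fun i => ?_) i <;>
    refine Fin.addCases (fun j => ?_) (fun j => ?_) j <;>
    simp [blockDiag1, one_apply, Fin.ext_iff]; omega

lemma blockDiag2_eq (A : Matrix (Fin n) (Fin n) ℝ) :
    blockDiag2 n A = (fromBlocks A 0 0 1).submatrix finSumFinEquiv.symm finSumFinEquiv.symm := by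
  ext i j
  refine Fin.addCases (fun i => ?_) (fun i => ?_) i <;>
    refine Fin.addCases (fun j => ?_) (fun j => ?_) j <;>
    simp [blockDiag2, one_apply, Fin.ext_iff]; omega

lemma filterBank_eq {c₀ : EuclideanSpace ℝ (Fin n)} {s₁ s₂ : ℝ} {RO : Matrix (Fin n) (Fin n) ℝ}
    {T : Fin (n + 1) → Matrix (Fin n) (Fin n) ℝ}
    (hTc : ∀ i, T i *ᵥ (RO *ᵥ c₀) = ‖c₀‖ • simplexVertex n i) :
    filterBank n c₀ s₁ s₂ RO T =
      (fromCols (‖c₀‖ • ((simplexMatrix n)ᵀ * RO)) (of fun _ k => ![s₁, s₂] k)).submatrix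
        id finSumFinEquiv.symm := by
  ext i k
  refine Fin.addCases (fun k => ?_) (fun k => ?_) k
  · have h : (ROᵀ * T i * RO) *ᵥ c₀ = ‖c₀‖ • (ROᵀ *ᵥ simplexVertex n i) := by
      rw [← mulVec_mulVec, ← mulVec_mulVec, hTc, mulVec_smul]
    simp only [filterBank, of_apply, Fin.val_castAdd, k.isLt, dite_true, h]
    simp [simplexMatrix, mul_apply, mulVec, dotProduct, mul_comm]
  · fin_cases k <;> simp [filterBank]

lemma simplexMatrix_mul_transpose_simplexRow (hn : 1 ≤ n) :
    simplexMatrix n * (simplexRow n)ᵀ = 0 :=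
  simplexMatrix_mul_const hn _

lemma simplexRow_mul_transpose_simplexMatrix (hn : 1 ≤ n) :
    simplexRow n * (simplexMatrix n)ᵀ = 0 := by
  rw [← transpose_transpose (simplexRow n), ← transpose_mul,
    simplexMatrix_mul_transpose_simplexRow hn, transpose_zero]

lemma simplexM_mul_transpose (hn : 1 ≤ n) : simplexM n * (simplexM n)ᵀ = 1 := by
  have hn' : (0 : ℝ) < n := by exact_mod_cast hn
  have hp : (√(1 + 1 / (n : ℝ)))⁻¹ * (√(1 + 1 / n))⁻¹ * (1 + 1 / n) = 1 := by
    rw [← mul_inv, Real.mul_self_sqrt (by positivity), inv_mul_cancel₀ (by positivity)]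
  have hI : fromBlocks ((1 + 1 / (n : ℝ)) • 1) 0 0 ((1 + 1 / (n : ℝ)) • 1) =
      (1 + 1 / (n : ℝ)) • (1 : Matrix (Fin n ⊕ Fin 1) (Fin n ⊕ Fin 1) ℝ) := by
    simp only [← fromBlocks_one, fromBlocks_smul, smul_zero]
  rw [simplexM_eq, transpose_submatrix, ← submatrix_mul _ _ _ _ _ Function.bijective_id,
    transpose_smul, smul_mul, Matrix.mul_smul, smul_smul, transpose_fromRows,
    fromRows_mul_fromCols, simplexMatrix_mul_transpose hn,
    simplexMatrix_mul_transpose_simplexRow hn, simplexRow_mul_transpose_simplexMatrix hn, simplexRow_mul_transpose hn, hI, smul_smul, hp,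
    one_smul, submatrix_one_equiv]

lemma simplexM_mulVec_one (hn : 1 ≤ n) :
    ∃ w : Fin 1 → ℝ, simplexM n *ᵥ 1 = Sum.elim (0 : Fin n → ℝ) w ∘ finSumFinEquiv.symm := by
  refine ⟨(√(1 + 1 / n))⁻¹ • (simplexRow n *ᵥ 1), ?_⟩
  rw [simplexM_eq]
  refine (submatrix_mulVec_equiv _ _ _ (Equiv.refl _)).trans ?_
  simp only [Equiv.refl_symm, Equiv.coe_refl, Function.comp_id]
  rw [smul_mulVec, fromRows_mulVec, simplexMatrix_mulVec_one hn]
  congr 1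
  ext (j | j) <;> simp

lemma simplexM_mul_filterBank (hn : 1 ≤ n) {c₀ : EuclideanSpace ℝ (Fin n)} (s₁ s₂ : ℝ)
    {RO : Matrix (Fin n) (Fin n) ℝ} {T : Fin (n + 1) → Matrix (Fin n) (Fin n) ℝ}
    (hTc : ∀ i, T i *ᵥ (RO *ᵥ c₀) = ‖c₀‖ • simplexVertex n i) :
    ∃ (c : ℝ) (C : Matrix (Fin 1) (Fin 2) ℝ), simplexM n * filterBank n c₀ s₁ s₂ RO T =
      (fromBlocks (c • RO) 0 0 C).submatrix finSumFinEquiv.symm finSumFinEquiv.symm := by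
  refine ⟨(√(1 + 1 / n))⁻¹ * ‖c₀‖ * (1 + 1 / n),
    (√(1 + 1 / n))⁻¹ • (simplexRow n * of fun _ k => ![s₁, s₂] k), ?_⟩
  rw [simplexM_eq, filterBank_eq hTc, ← submatrix_mul _ _ _ _ _ Function.bijective_id, smul_mul,
    fromRows_mul_fromCols]
  simp [Matrix.mul_smul, ← Matrix.mul_assoc, simplexMatrix_mul_transpose hn,
    simplexMatrix_mul_const hn, simplexRow_mul_transpose_simplexMatrix hn, fromBlocks_smul,
    smul_smul, mul_assoc]
  rfl

lemma blockDiag1_mul_fromBlocks {A Q R : Matrix (Fin n) (Fin n) ℝ} (C : Matrix (Fin 1) (Fin 2) ℝ)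
    (h : A * Q = Q * R) :
    blockDiag1 n A * (fromBlocks Q 0 0 C).submatrix finSumFinEquiv.symm finSumFinEquiv.symm =
      (fromBlocks Q 0 0 C).submatrix finSumFinEquiv.symm finSumFinEquiv.symm * blockDiag2 n R := by
  rw [blockDiag1_eq, blockDiag2_eq, submatrix_mul_equiv, submatrix_mul_equiv, fromBlocks_multiply,
    fromBlocks_multiply]
  simp [h]

lemma blockDiag1_mulVec_sumElim_zero (A : Matrix (Fin n) (Fin n) ℝ) (w : Fin 1 → ℝ) :
    blockDiag1 n A *ᵥ (Sum.elim (0 : Fin n → ℝ) w ∘ finSumFinEquiv.symm) =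
      Sum.elim (0 : Fin n → ℝ) w ∘ finSumFinEquiv.symm := by
  rw [blockDiag1_eq, submatrix_mulVec_equiv]
  simp [fromBlocks_mulVec, Function.comp_assoc]

end Simplex

theorem equivariant_bias_general (n : ℕ) (hn : 1 ≤ n)
    (c₀ : EuclideanSpace ℝ (Fin n)) (s₁ s₂ : ℝ)
    (RO : Matrix (Fin n) (Fin n) ℝ) (hRO : ROᵀ * RO = 1)
    (T : Fin (n + 1) → Matrix (Fin n) (Fin n) ℝ)
    (hTc : ∀ i, (T i).mulVec (RO.mulVec c₀) = ‖c₀‖ • simplexVertex n i)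
    (R : Matrix (Fin n) (Fin n) ℝ)
    (X : Fin (n + 2) → ℝ) (b : ℝ) :
    ((simplexM n)ᵀ * blockDiag1 n (RO * R * ROᵀ) * simplexM n).mulVec
        ((filterBank n c₀ s₁ s₂ RO T).mulVec X + b • fun _ => (1 : ℝ)) =
      (filterBank n c₀ s₁ s₂ RO T).mulVec ((blockDiag2 n R).mulVec X) +
        b • fun _ => (1 : ℝ) := by
  have hM : (simplexM n)ᵀ * simplexM n = 1 := mul_eq_one_comm.mp (simplexM_mul_transpose hn)
  obtain ⟨c, C, hMB⟩ := simplexM_mul_filterBank hn s₁ s₂ hTc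
  obtain ⟨w, hM1⟩ := simplexM_mulVec_one hn
  have hcRO : RO * R * ROᵀ * (c • RO) = c • RO * R := by
    rw [Matrix.mul_smul, Matrix.mul_assoc, hRO, Matrix.mul_one, Matrix.smul_mul]
  have hVB := mul_mul_mul_eq_of_intertwine hM
    (by rw [hMB]; exact blockDiag1_mul_fromBlocks C hcRO)
  have hV1 := mul_mul_mulVec_eq_self (D := blockDiag1 n (RO * R * ROᵀ)) (v := 1) hM
    (by rw [hM1]; exact blockDiag1_mulVec_sumElim_zero _ w)
  rw [← Pi.one_def, mulVec_add, mulVec_smul, hV1, mulVec_mulVec, hVB, ← mulVec_mulVec]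

/-- (Proposition: equivariant bias.) For every R ∈ O(n), every input X ∈ ℝ^{n+2} and
every scalar b ∈ ℝ: V · (B·X + b·𝟙_{n+1}) = B·(D₂(R)·X) + b·𝟙_{n+1}, where
V = M_nᵀ · D(R_O · R · R_Oᵀ) · M_n. -/
theorem equivariant_bias (n : ℕ) (hn : 1 ≤ n)
    (c₀ : EuclideanSpace ℝ (Fin n)) (s₁ s₂ : ℝ)
    (RO : Matrix (Fin n) (Fin n) ℝ) (hRO : ROᵀ * RO = 1)
    (T : Fin (n + 1) → Matrix (Fin n) (Fin n) ℝ) (hT : ∀ i, (T i)ᵀ * T i = 1)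
    (hTc : ∀ i, (T i).mulVec (RO.mulVec c₀) = ‖c₀‖ • simplexVertex n i)
    (R : Matrix (Fin n) (Fin n) ℝ) (hR : Rᵀ * R = 1)
    (X : Fin (n + 2) → ℝ) (b : ℝ) :
    ((simplexM n)ᵀ * blockDiag1 n (RO * R * ROᵀ) * simplexM n).mulVec
        ((filterBank n c₀ s₁ s₂ RO T).mulVec X + b • fun _ => (1 : ℝ)) =
      (filterBank n c₀ s₁ s₂ RO T).mulVec ((blockDiag2 n R).mulVec X) +
        b • fun _ => (1 : ℝ) :=
  equivariant_bias_general n hn c₀ s₁ s₂ RO hRO T hTc R X b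
end
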